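/- Let M be a unital C*-algebra, x ∈ M with x + x* ≥ 0 such that 1 + x is invertible with inverse v, and suppose both v and v* are contractions. If x is self-adjoint and positive, then v*(x+1)v = (1/2)(v + v*), hence v*(x+1)v ≤ 1. -/
import Mathlib

/-- If `x` is a positive (self-adjoint) element of a unital C*-algebra such that `1 + x`
is invertible with inverse `v`, and `v`, `v*` are contractions, then
`v*(x+1)v = (1/2)(v + v*)`, hence `v*(x+1)v ≤ 1`. -/
theorem stmt_3 {M : Type*} [NormedRing M] [StarRing M] [CStarRing M] [CompleteSpace M]
    [NormedAlgebra ℂ M] [StarModule ℂ M] [PartialOrder M] [StarOrderedRing M]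
    (x v : M) (hx_sa : IsSelfAdjoint x) (hx_pos : 0 ≤ x)
    (hv₁ : (1 + x) * v = 1) (hv₂ : v * (1 + x) = 1)
    (hv : ‖v‖ ≤ 1) (hvs : ‖star v‖ ≤ 1) :
    star v * (x + 1) * v = ((2 : ℂ)⁻¹) • (v + star v) ∧
      star v * (x + 1) * v ≤ 1 := by
  have hvsa : star v = v := by
    have h1 : star v * (1 + x) = 1 := by
      have := congrArg star hv₁
      simpa [star_mul, hx_sa.star_eq] using this
    calc star v = star v * ((1 + x) * v) := by rw [hv₁, mul_one]
      _ = (star v * (1 + x)) * v := by rw [mul_assoc]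
      _ = v := by rw [h1, one_mul]
  have key : star v * (x + 1) * v = v := by
    rw [hvsa]
    have : v * (x + 1) = 1 := by rwa [add_comm] at hv₂
    rw [this, one_mul]
  have heq : star v * (x + 1) * v = ((2 : ℂ)⁻¹) • (v + star v) := by
    rw [key, hvsa, ← two_smul ℂ v, smul_smul]
    norm_num
  refine ⟨heq, ?_⟩
  rw [key]
  have hvpos : 0 ≤ v := by
    have : 0 ≤ star v * (x + 1) * v := by
      exact star_left_conjugate_nonneg (add_nonneg hx_pos zero_le_one) v
    rwa [key] at this
  letI : CStarAlgebra M := ⟨⟩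
  rwa [← CStarAlgebra.norm_le_one_iff_of_nonneg v hvpos]
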